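/- arXiv:2412.17525 — 4 statements merged into one kernel-verified Lean document; each statement's English description precedes it below -/
import Mathlib

section
/- Under the hypotheses of Gelfand's trick (G a locally compact group with Haar measure, θ an involutive automorphism, K = G^θ compact open (or in the discrete setting: the group algebra over a finite group), such that f(θ(g)) = f(g⁻¹) for every bi-K-invariant f), the convolution algebra of bi-K-invariant finitely supported functions on G is commutative. -/
/-!
Write `f ⋆ h` for the convolution. Since `τ` reverses products and is bijective, the substitution
`g ↦ τ (g⁻¹ * x)` gives `(f ⋆ h) (τ x) = ((h ∘ τ) ⋆ (f ∘ τ)) x`. Every bi-`K`-invariant function is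
constant on double cosets, hence `τ`-invariant; as `f`, `h` and `f ⋆ h` are all bi-`K`-invariant,
`(f ⋆ h) x = (f ⋆ h) (τ x) = (h ⋆ f) x`.
-/

namespace GelfandTrick

variable {G R : Type*} [Group G]

noncomputable def conv [Semiring R] (f h : G → R) (x : G) : R :=
  ∑ᶠ g : G, f g * h (g⁻¹ * x)

def BiInvariant (K : Subgroup G) (f : G → R) : Prop :=
  ∀ k₁ ∈ K, ∀ k₂ ∈ K, ∀ g : G, f (k₁ * g * k₂) = f g

section AntiHom

variable {τ : G → G} (hanti : ∀ x y : G, τ (x * y) = τ y * τ x)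
include hanti

theorem map_one_of_anti : τ 1 = 1 := by
  simpa using hanti 1 1

theorem map_inv_of_anti (g : G) : τ g⁻¹ = (τ g)⁻¹ :=
  eq_inv_of_mul_eq_one_left (by rw [← hanti, mul_inv_cancel, map_one_of_anti hanti])

theorem conv_apply_of_anti [CommSemiring R] (hbij : Function.Bijective τ) (f h : G → R) (x : G) :
    conv f h (τ x) = conv (h ∘ τ) (f ∘ τ) x := by
  let e : G ≃ G := ((Equiv.inv G).trans (Equiv.mulRight x)).trans (Equiv.ofBijective τ hbij)
  have he : ∀ g, (e g)⁻¹ * τ x = τ g := fun g => by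
    change (τ (g⁻¹ * x))⁻¹ * τ x = τ g
    rw [← map_inv_of_anti hanti, ← hanti]
    group
  unfold conv
  rw [← finsum_comp_equiv e]
  exact finsum_congr fun g => by rw [he, mul_comm]; rfl

end AntiHom

variable {K : Subgroup G}

theorem BiInvariant.conv [Semiring R] {f h : G → R} (hf : BiInvariant K f) (hh : BiInvariant K h) :
    BiInvariant K (conv f h) := by
  intro k₁ hk₁ k₂ hk₂ x
  have hf_left : ∀ g, f (k₁ * g) = f g := fun g => by simpa using hf k₁ hk₁ 1 K.one_mem g
  have hh_right : ∀ y, h (y * k₂) = h y := fun y => by simpa using hh 1 K.one_mem k₂ hk₂ y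
  unfold GelfandTrick.conv
  rw [← finsum_comp_equiv (Equiv.mulLeft k₁)]
  refine finsum_congr fun g => ?_
  simp only [Equiv.coe_mulLeft, mul_inv_rev, hf_left]
  rw [← hh_right (g⁻¹ * x)]
  group

theorem BiInvariant.comp_eq {f : G → R} (hf : BiInvariant K f) {τ : G → G}
    (hτ : ∀ g : G, ∃ k₁ ∈ K, ∃ k₂ ∈ K, τ g = k₁ * g * k₂) (g : G) : f (τ g) = f g := by
  obtain ⟨k₁, hk₁, k₂, hk₂, hg⟩ := hτ g
  rw [hg, hf k₁ hk₁ k₂ hk₂]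

end GelfandTrick

open GelfandTrick in
theorem stmt1_general {G : Type*} [Group G] (K : Subgroup G)
    (τ : G → G) (hbij : Function.Bijective τ)
    (hanti : ∀ x y : G, τ (x * y) = τ y * τ x)
    (hτ : ∀ g : G, ∃ k₁ ∈ K, ∃ k₂ ∈ K, τ g = k₁ * g * k₂)
    (f h : G → ℂ)
    (hfK : ∀ k₁ ∈ K, ∀ k₂ ∈ K, ∀ g : G, f (k₁ * g * k₂) = f g)
    (hhK : ∀ k₁ ∈ K, ∀ k₂ ∈ K, ∀ g : G, h (k₁ * g * k₂) = h g) :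
    ∀ x : G, ∑ᶠ g : G, f g * h (g⁻¹ * x) = ∑ᶠ g : G, h g * f (g⁻¹ * x) := by
  intro x
  have hf : BiInvariant K f := hfK
  have hh : BiInvariant K h := hhK
  calc conv f h x
      = conv f h (τ x) := ((hf.conv hh).comp_eq hτ x).symm
    _ = conv (h ∘ τ) (f ∘ τ) x := conv_apply_of_anti hanti hbij f h x
    _ = conv h f x := by
      rw [show h ∘ τ = h from funext (hh.comp_eq hτ), show f ∘ τ = f from funext (hf.comp_eq hτ)]

/-- Gelfand's trick: if there is an anti-automorphism `τ` of `G` fixing every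
double coset `KgK`, then the convolution algebra of finitely supported
bi-`K`-invariant functions on `G` is commutative. -/
theorem stmt1 {G : Type*} [Group G] (K : Subgroup G) (hK : (K : Set G).Finite)
    (τ : G → G) (hbij : Function.Bijective τ)
    (hanti : ∀ x y : G, τ (x * y) = τ y * τ x)
    (hτ : ∀ g : G, ∃ k₁ ∈ K, ∃ k₂ ∈ K, τ g = k₁ * g * k₂)
    (f h : G → ℂ)
    (hfs : (Function.support f).Finite) (hhs : (Function.support h).Finite)
    (hfK : ∀ k₁ ∈ K, ∀ k₂ ∈ K, ∀ g : G, f (k₁ * g * k₂) = f g)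
    (hhK : ∀ k₁ ∈ K, ∀ k₂ ∈ K, ∀ g : G, h (k₁ * g * k₂) = h g) :
    ∀ x : G, ∑ᶠ g : G, f g * h (g⁻¹ * x) = ∑ᶠ g : G, h g * f (g⁻¹ * x) :=
  stmt1_general K τ hbij hanti hτ f h hfK hhK
end

section
/- Let ε₊ = |W|⁻¹ Σ_{w∈W} w in the graded affine Hecke algebra ℍ(R₊,k). Then ε₊ is idempotent and the spherical subalgebra ε₊ ℍ ε₊ equals ε₊ · Z(ℍ) = ε₊ · S(𝔱)^W; in particular ε₊ ℍ ε₊ is commutative and isomorphic as an algebra to S(𝔱)^W. -/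
/-!
Because `ε₊ σ_w = σ_w ε₊ = ε₊` and `H` is spanned by the `ι r σ_w`, the space `ε₊ H ε₊` is
spanned by the `ε₊ ι(r) ε₊`. The cross relations give `σ_w ι(p) ≡ ι(w p) σ_w` modulo
elements `ι(r) σ_v` of lower degree, so averaging over `w` yields
`ε₊ ι(p) ε₊ ≡ ε₊ ι(p̄) ε₊ = ε₊ ι(p̄)`, where `p̄` is the `W`-average of `p`; the last equality
holds because invariant polynomials commute with `W`. Induction on the degree gives
`ε₊ H ε₊ = ε₊ S(𝔱)^W`, which is commutative since `ε₊ ι(p) ε₊ ι(q) = ε₊ ι(pq)`, and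
`p ↦ ε₊ ι(p)` is injective because `H` is free over `S(𝔱)` with basis `W`.
-/

/-- The graded affine Hecke algebra `ℍ(R₊,k)` attached to a root system with
Weyl group `W` (generated by the simple reflections `s i`) acting on the
polynomial algebra `S(𝔱) = ℂ[x₁,…,xₙ]`: a `ℂ`-algebra `H` containing `S(𝔱)`
(via `ι`) and `ℂ[W]` (via `σ`), isomorphic to `S(𝔱) ⊗ ℂ[W]` as a vector space
(`free`), with the Lusztig cross relations
`s_i·p − s_i(p)·s_i = −k_i (p − s_i(p))/α_i^∨`. -/
structure GAHA (n : ℕ) (B W : Type*) [Group W] (H : Type*) [Ring H]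
    [Algebra ℂ H] where
  /-- the action of `W` on `S(𝔱)` by algebra automorphisms -/
  act : W →* (MvPolynomial (Fin n) ℂ ≃ₐ[ℂ] MvPolynomial (Fin n) ℂ)
  /-- the simple reflections -/
  s : B → W
  sq : ∀ i : B, s i * s i = 1
  gen : Subgroup.closure (Set.range s) = ⊤
  /-- the simple coroots `α_i^∨`, as linear polynomials -/
  coroot : B → MvPolynomial (Fin n) ℂ
  coroot_ne : ∀ i : B, coroot i ≠ 0
  coroot_deg : ∀ i : B, (coroot i).totalDegree = 1
  refl : ∀ i : B, act (s i) (coroot i) = - coroot i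
  hdiv : ∀ (i : B) (p : MvPolynomial (Fin n) ℂ),
    ∃ q : MvPolynomial (Fin n) ℂ, p - act (s i) p = coroot i * q
  /-- the parameters `k_i` -/
  k : B → ℂ
  ι : MvPolynomial (Fin n) ℂ →ₐ[ℂ] H
  σ : W →* H
  free : Function.Bijective fun f : W →₀ MvPolynomial (Fin n) ℂ =>
    f.sum fun g p => ι p * σ g
  cross : ∀ (i : B) (p q : MvPolynomial (Fin n) ℂ),
    p - act (s i) p = coroot i * q →
    σ (s i) * ι p - ι (act (s i) p) * σ (s i) = (- k i) • ι q

open MvPolynomial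

theorem MvPolynomial.totalDegree_pos_map_algEquiv {σ R : Type*} [CommSemiring R]
    (φ : MvPolynomial σ R ≃ₐ[R] MvPolynomial σ R) {p : MvPolynomial σ R}
    (hp : 0 < p.totalDegree) : 0 < (φ p).totalDegree := by
  rw [Nat.pos_iff_ne_zero] at hp ⊢
  intro h
  apply hp
  obtain ⟨c, hc⟩ : ∃ c, φ p = C c := ⟨_, totalDegree_eq_zero_iff_eq_C.mp h⟩
  rw [← φ.symm_apply_apply p, hc, ← algebraMap_eq, AlgEquiv.commutes, algebraMap_eq,
    totalDegree_C]

theorem inv_card_smul_sum_const {W M : Type*} [Fintype W] [Nonempty W] [AddCommGroup M]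
    [Module ℂ M] (x : M) : (Fintype.card W : ℂ)⁻¹ • ∑ _w : W, x = x := by
  rw [Finset.sum_const, Finset.card_univ, ← Nat.cast_smul_eq_nsmul ℂ, smul_smul,
    inv_mul_cancel₀ (Nat.cast_ne_zero.mpr Fintype.card_ne_zero), one_smul]

namespace GAHA

variable {n : ℕ} {B W H : Type*} [Group W] [Ring H] [Algebra ℂ H] (D : GAHA n B W H)

@[elab_as_elim]
theorem induction_on_s {P : W → Prop} (one : P 1)
    (s_mul : ∀ i w, P w → P (D.s i * w)) (w : W) : P w := by
  have hw : w ∈ Subgroup.closure (Set.range D.s) := D.gen ▸ Subgroup.mem_top w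
  induction hw using Subgroup.closure_induction_left with
  | one => exact one
  | mul_left _ hx _ _ ih => obtain ⟨i, rfl⟩ := hx; exact s_mul i _ ih
  | inv_mul_cancel _ hx _ _ ih =>
    obtain ⟨i, rfl⟩ := hx
    rw [inv_eq_of_mul_eq_one_right (D.sq i)]
    exact s_mul i _ ih

theorem act_act (u v : W) (p : MvPolynomial (Fin n) ℂ) :
    D.act u (D.act v p) = D.act (u * v) p := by
  rw [map_mul]; rfl

theorem σ_commute_ι_of_invariant {p : MvPolynomial (Fin n) ℂ} (hp : ∀ w, D.act w p = p)
    (w : W) : Commute (D.σ w) (D.ι p) := by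
  induction w using D.induction_on_s with
  | one => rw [map_one]; exact Commute.one_left _
  | s_mul i w ih =>
    rw [map_mul]
    refine Commute.mul_left ?_ ih
    have hc := D.cross i p 0 (by rw [hp, sub_self, mul_zero])
    rwa [hp, map_zero, smul_zero, sub_eq_zero] at hc

variable [Fintype W]

/-- `W` need not act by graded automorphisms, so the induction runs on this `W`-invariant
substitute for the total degree. -/
noncomputable def orbitDegree (p : MvPolynomial (Fin n) ℂ) : ℕ :=
  Finset.univ.sup fun w : W => (D.act w p).totalDegree

theorem totalDegree_act_le_orbitDegree (w : W) (p : MvPolynomial (Fin n) ℂ) :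
    (D.act w p).totalDegree ≤ D.orbitDegree p :=
  Finset.le_sup (f := fun w : W => (D.act w p).totalDegree) (Finset.mem_univ w)

theorem orbitDegree_act (w : W) (p : MvPolynomial (Fin n) ℂ) :
    D.orbitDegree (D.act w p) = D.orbitDegree p := by
  refine le_antisymm (Finset.sup_le fun v _ => ?_) (Finset.sup_le fun v _ => ?_)
  · rw [act_act]
    exact D.totalDegree_act_le_orbitDegree (v * w) p
  · have : D.act v p = D.act (v * w⁻¹) (D.act w p) := by
      rw [act_act, inv_mul_cancel_right]
    rw [this]
    exact D.totalDegree_act_le_orbitDegree (v * w⁻¹) (D.act w p)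

/-- Every `W`-translate of `α_i^∨` has positive degree, so dividing by it lowers degrees. -/
theorem orbitDegree_lt_of_sub_act_s_eq {i : B} {p q : MvPolynomial (Fin n) ℂ}
    (hq : p - D.act (D.s i) p = D.coroot i * q) (hq0 : q ≠ 0) :
    D.orbitDegree q < D.orbitDegree p := by
  have key : ∀ v : W, (D.act v q).totalDegree < D.orbitDegree p := by
    intro v
    have hα : 0 < (D.act v (D.coroot i)).totalDegree :=
      totalDegree_pos_map_algEquiv _ (by rw [D.coroot_deg]; exact one_pos)
    have hprod : D.act v (D.coroot i) * D.act v q = D.act v p - D.act (v * D.s i) p := by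
      rw [← map_mul, ← hq, map_sub, act_act]
    have hdeg := totalDegree_mul_of_isDomain
      ((map_ne_zero_iff _ (D.act v).injective).mpr (D.coroot_ne i))
      ((map_ne_zero_iff _ (D.act v).injective).mpr hq0)
    rw [hprod] at hdeg
    have := totalDegree_sub (D.act v p) (D.act (v * D.s i) p)
    have := D.totalDegree_act_le_orbitDegree v p
    have := D.totalDegree_act_le_orbitDegree (v * D.s i) p
    omega
  exact (Finset.sup_lt_iff ((Nat.zero_le _).trans_lt (key 1))).mpr fun v _ => key v

noncomputable def degreeLT (t : ℕ) : Submodule ℂ H :=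
  Submodule.span ℂ {x | ∃ r g, D.orbitDegree r < t ∧ x = D.ι r * D.σ g}

theorem ι_mul_σ_mem_degreeLT {t : ℕ} {r : MvPolynomial (Fin n) ℂ} (hr : D.orbitDegree r < t)
    (g : W) : D.ι r * D.σ g ∈ D.degreeLT t :=
  Submodule.subset_span ⟨r, g, hr, rfl⟩

theorem degreeLT_mono {t t' : ℕ} (h : t ≤ t') : D.degreeLT t ≤ D.degreeLT t' :=
  Submodule.span_mono fun _ ⟨r, g, hr, hx⟩ => ⟨r, g, hr.trans_le h, hx⟩

theorem mul_σ_mem_degreeLT {t : ℕ} {x : H} (hx : x ∈ D.degreeLT t) (g : W) :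
    x * D.σ g ∈ D.degreeLT t := by
  induction hx using Submodule.span_induction with
  | mem y hy =>
    obtain ⟨r, g', hr, rfl⟩ := hy
    rw [mul_assoc, ← map_mul]
    exact D.ι_mul_σ_mem_degreeLT hr _
  | zero => rw [zero_mul]; exact zero_mem _
  | add y z _ _ ihy ihz => rw [add_mul]; exact add_mem ihy ihz
  | smul c y _ ihy => rw [smul_mul_assoc]; exact Submodule.smul_mem _ c ihy

theorem σ_s_mul_ι_sub_mem_degreeLT (i : B) (p : MvPolynomial (Fin n) ℂ) :
    D.σ (D.s i) * D.ι p - D.ι (D.act (D.s i) p) * D.σ (D.s i) ∈ D.degreeLT (D.orbitDegree p) := by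
  obtain ⟨q, hq⟩ := D.hdiv i p
  rw [D.cross i p q hq]
  rcases eq_or_ne q 0 with rfl | hq0
  · rw [map_zero, smul_zero]; exact zero_mem _
  · refine Submodule.smul_mem _ _ ?_
    simpa using D.ι_mul_σ_mem_degreeLT (D.orbitDegree_lt_of_sub_act_s_eq hq hq0) 1

theorem σ_s_mul_mem_degreeLT (i : B) {t : ℕ} {x : H} (hx : x ∈ D.degreeLT t) :
    D.σ (D.s i) * x ∈ D.degreeLT t := by
  induction hx using Submodule.span_induction with
  | mem y hy =>
    obtain ⟨r, g, hr, rfl⟩ := hy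
    have hsplit : D.σ (D.s i) * (D.ι r * D.σ g) = D.ι (D.act (D.s i) r) * D.σ (D.s i * g)
        + (D.σ (D.s i) * D.ι r - D.ι (D.act (D.s i) r) * D.σ (D.s i)) * D.σ g := by
      rw [map_mul]; noncomm_ring
    rw [hsplit]
    refine add_mem (D.ι_mul_σ_mem_degreeLT (by rwa [orbitDegree_act]) _) ?_
    exact D.mul_σ_mem_degreeLT (D.degreeLT_mono hr.le (D.σ_s_mul_ι_sub_mem_degreeLT i r)) g
  | zero => rw [mul_zero]; exact zero_mem _
  | add y z _ _ ihy ihz => rw [mul_add]; exact add_mem ihy ihz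
  | smul c y _ ihy => rw [mul_smul_comm]; exact Submodule.smul_mem _ c ihy

theorem σ_mul_ι_sub_mem_degreeLT (w : W) (p : MvPolynomial (Fin n) ℂ) :
    D.σ w * D.ι p - D.ι (D.act w p) * D.σ w ∈ D.degreeLT (D.orbitDegree p) := by
  induction w using D.induction_on_s generalizing p with
  | one => simp
  | s_mul i w ih =>
    have hsplit : D.σ (D.s i * w) * D.ι p - D.ι (D.act (D.s i * w) p) * D.σ (D.s i * w)
        = D.σ (D.s i) * (D.σ w * D.ι p - D.ι (D.act w p) * D.σ w)
          + (D.σ (D.s i) * D.ι (D.act w p)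
              - D.ι (D.act (D.s i) (D.act w p)) * D.σ (D.s i)) * D.σ w := by
      rw [map_mul, act_act]; noncomm_ring
    rw [hsplit]
    refine add_mem (D.σ_s_mul_mem_degreeLT i (ih p)) (D.mul_σ_mem_degreeLT ?_ w)
    simpa only [orbitDegree_act] using D.σ_s_mul_ι_sub_mem_degreeLT i (D.act w p)

noncomputable def symmetrizer : H :=
  (Fintype.card W : ℂ)⁻¹ • ∑ w : W, D.σ w

theorem σ_mul_symmetrizer (w : W) : D.σ w * D.symmetrizer = D.symmetrizer := by
  rw [symmetrizer, mul_smul_comm, Finset.mul_sum]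
  congr 1
  exact Fintype.sum_equiv (Equiv.mulLeft w) _ _ fun v => (map_mul D.σ w v).symm

theorem symmetrizer_mul_σ (w : W) : D.symmetrizer * D.σ w = D.symmetrizer := by
  rw [symmetrizer, smul_mul_assoc, Finset.sum_mul]
  congr 1
  exact Fintype.sum_equiv (Equiv.mulRight w) _ _ fun v => (map_mul D.σ v w).symm

theorem symmetrizer_mul_self : D.symmetrizer * D.symmetrizer = D.symmetrizer := by
  conv_lhs => enter [1]; rw [symmetrizer]
  simp only [smul_mul_assoc, Finset.sum_mul, σ_mul_symmetrizer, inv_card_smul_sum_const]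

theorem symmetrizer_commute_ι_of_invariant {p : MvPolynomial (Fin n) ℂ}
    (hp : ∀ w, D.act w p = p) : Commute D.symmetrizer (D.ι p) :=
  (Commute.sum_left _ _ _ fun w _ => D.σ_commute_ι_of_invariant hp w).smul_left _

theorem symmetrizer_mul_ι_mul_symmetrizer_of_invariant {p : MvPolynomial (Fin n) ℂ}
    (hp : ∀ w, D.act w p = p) :
    D.symmetrizer * D.ι p * D.symmetrizer = D.symmetrizer * D.ι p := by
  rw [mul_assoc, ← (D.symmetrizer_commute_ι_of_invariant hp).eq, ← mul_assoc,
    symmetrizer_mul_self]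

theorem symmetrizer_mul_ι_mul_σ_mul_symmetrizer (r : MvPolynomial (Fin n) ℂ) (g : W) :
    D.symmetrizer * (D.ι r * D.σ g) * D.symmetrizer = D.symmetrizer * D.ι r * D.symmetrizer := by
  rw [← mul_assoc, mul_assoc _ (D.σ g), σ_mul_symmetrizer]

noncomputable def average (p : MvPolynomial (Fin n) ℂ) : MvPolynomial (Fin n) ℂ :=
  (Fintype.card W : ℂ)⁻¹ • ∑ w : W, D.act w p

theorem act_average (p : MvPolynomial (Fin n) ℂ) (v : W) :
    D.act v (D.average p) = D.average p := by
  rw [average, map_smul, map_sum]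
  congr 1
  exact Fintype.sum_equiv (Equiv.mulLeft v) _ _ fun w => D.act_act v w p

theorem symmetrizer_sandwich_sub_average (p : MvPolynomial (Fin n) ℂ) :
    D.symmetrizer * D.ι p * D.symmetrizer
        - D.symmetrizer * D.ι (D.average p) * D.symmetrizer
      = (Fintype.card W : ℂ)⁻¹ • ∑ w : W, D.symmetrizer
          * (D.σ w * D.ι p - D.ι (D.act w p) * D.σ w) * D.symmetrizer := by
  have hsummand : ∀ w : W, D.symmetrizer * (D.σ w * D.ι p - D.ι (D.act w p) * D.σ w)
        * D.symmetrizer = D.symmetrizer * D.ι p * D.symmetrizer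
          - D.symmetrizer * D.ι (D.act w p) * D.symmetrizer := by
    intro w
    rw [mul_sub, sub_mul, symmetrizer_mul_ι_mul_σ_mul_symmetrizer, ← mul_assoc,
      symmetrizer_mul_σ]
  simp only [hsummand, Finset.sum_sub_distrib, smul_sub, inv_card_smul_sum_const]
  rw [average, map_smul, map_sum, mul_smul_comm, smul_mul_assoc, Finset.mul_sum,
    Finset.sum_mul]

/-- The subspace `ε₊ · S(𝔱)^W` of `H`. -/
def symmetrizedInvariants : Submodule ℂ H where
  carrier := {x | ∃ p : MvPolynomial (Fin n) ℂ, (∀ w, D.act w p = p) ∧ x = D.symmetrizer * D.ι p}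
  add_mem' := by
    rintro _ _ ⟨p, hp, rfl⟩ ⟨q, hq, rfl⟩
    exact ⟨p + q, fun w => by rw [map_add, hp, hq], by rw [map_add, mul_add]⟩
  zero_mem' := ⟨0, fun _ => map_zero _, by rw [map_zero, mul_zero]⟩
  smul_mem' := by
    rintro c _ ⟨p, hp, rfl⟩
    exact ⟨c • p, fun w => by rw [map_smul, hp], by rw [map_smul, mul_smul_comm]⟩

theorem symmetrizer_mul_mul_symmetrizer_mem_of_mem_degreeLT {t : ℕ}
    (hlower : ∀ r, D.orbitDegree r < t →
      D.symmetrizer * D.ι r * D.symmetrizer ∈ D.symmetrizedInvariants)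
    {x : H} (hx : x ∈ D.degreeLT t) :
    D.symmetrizer * x * D.symmetrizer ∈ D.symmetrizedInvariants := by
  induction hx using Submodule.span_induction with
  | mem y hy =>
    obtain ⟨r, g, hr, rfl⟩ := hy
    rw [symmetrizer_mul_ι_mul_σ_mul_symmetrizer]
    exact hlower r hr
  | zero => rw [mul_zero, zero_mul]; exact zero_mem _
  | add y z _ _ ihy ihz => rw [mul_add, add_mul]; exact add_mem ihy ihz
  | smul c y _ ihy => rw [mul_smul_comm, smul_mul_assoc]; exact Submodule.smul_mem _ c ihy

theorem symmetrizer_mul_ι_mul_symmetrizer_mem (p : MvPolynomial (Fin n) ℂ) :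
    D.symmetrizer * D.ι p * D.symmetrizer ∈ D.symmetrizedInvariants := by
  induction hd : D.orbitDegree p using Nat.strong_induction_on generalizing p with
  | _ d ih =>
    rw [← sub_add_cancel (D.symmetrizer * D.ι p * D.symmetrizer)
      (D.symmetrizer * D.ι (D.average p) * D.symmetrizer), symmetrizer_sandwich_sub_average]
    refine add_mem (Submodule.smul_mem _ _ (Submodule.sum_mem _ fun w _ => ?_)) ?_
    · refine D.symmetrizer_mul_mul_symmetrizer_mem_of_mem_degreeLT (fun r hr => ih _ hr r rfl) ?_
      exact hd ▸ D.σ_mul_ι_sub_mem_degreeLT w p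
    · exact ⟨D.average p, D.act_average p,
        D.symmetrizer_mul_ι_mul_symmetrizer_of_invariant (D.act_average p)⟩

theorem symmetrizer_mul_mul_symmetrizer_mem (h : H) :
    D.symmetrizer * h * D.symmetrizer ∈ D.symmetrizedInvariants := by
  obtain ⟨f, rfl⟩ := D.free.2 h
  simp only [Finsupp.sum, Finset.mul_sum, Finset.sum_mul]
  refine Submodule.sum_mem _ fun g _ => ?_
  rw [symmetrizer_mul_ι_mul_σ_mul_symmetrizer]
  exact D.symmetrizer_mul_ι_mul_symmetrizer_mem (f g)

theorem symmetrizer_mul_ι_mul_symmetrizer_mul_ι {p : MvPolynomial (Fin n) ℂ}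
    (hp : ∀ w, D.act w p = p) (q : MvPolynomial (Fin n) ℂ) :
    D.symmetrizer * D.ι p * (D.symmetrizer * D.ι q) = D.symmetrizer * D.ι (p * q) := by
  rw [← mul_assoc, D.symmetrizer_mul_ι_mul_symmetrizer_of_invariant hp, mul_assoc, map_mul]

theorem symmetrizer_mul_ι_eq_sum {p : MvPolynomial (Fin n) ℂ} (hp : ∀ w, D.act w p = p) :
    D.symmetrizer * D.ι p = (Finsupp.equivFunOnFinite.symm
      fun _ : W => (Fintype.card W : ℂ)⁻¹ • p).sum fun g r => D.ι r * D.σ g := by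
  rw [Finsupp.sum_fintype _ _ fun w => by rw [map_zero, zero_mul], symmetrizer, smul_mul_assoc,
    Finset.sum_mul, Finset.smul_sum]
  refine Finset.sum_congr rfl fun w _ => ?_
  rw [(D.σ_commute_ι_of_invariant hp w).eq, Finsupp.coe_equivFunOnFinite_symm, map_smul,
    smul_mul_assoc]

theorem eq_of_symmetrizer_mul_ι_eq {p q : MvPolynomial (Fin n) ℂ} (hp : ∀ w, D.act w p = p)
    (hq : ∀ w, D.act w q = q) (h : D.symmetrizer * D.ι p = D.symmetrizer * D.ι q) : p = q := by
  rw [D.symmetrizer_mul_ι_eq_sum hp, D.symmetrizer_mul_ι_eq_sum hq] at h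
  have hcoeff := congrFun (Finsupp.equivFunOnFinite.symm.injective (D.free.1 h)) 1
  exact smul_right_injective _ (inv_ne_zero (Nat.cast_ne_zero.mpr Fintype.card_ne_zero)) hcoeff

end GAHA

/-- With `ε₊ = |W|⁻¹ Σ_w w ∈ ℍ(R₊,k)`: `ε₊` is idempotent, the spherical
subalgebra `ε₊ ℍ ε₊` equals `ε₊ · S(𝔱)^W`, is commutative, and is isomorphic
as an algebra to `S(𝔱)^W` via `p ↦ ε₊ · ι(p)` (a multiplicative injection). -/
theorem stmt7 {n : ℕ} {B W H : Type*} [Group W] [Fintype W] [Ring H]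
    [Algebra ℂ H] (D : GAHA n B W H) :
    let e : H := (Fintype.card W : ℂ)⁻¹ • ∑ w : W, D.σ w
    e * e = e ∧
    (∀ x : H, (∃ h : H, x = e * h * e) ↔
      ∃ p : MvPolynomial (Fin n) ℂ, (∀ w : W, D.act w p = p) ∧ x = e * D.ι p) ∧
    (∀ a b : H, (e * a * e) * (e * b * e) = (e * b * e) * (e * a * e)) ∧
    (∀ p q : MvPolynomial (Fin n) ℂ, (∀ w : W, D.act w p = p) →
      (∀ w : W, D.act w q = q) →
      (e * D.ι p) * (e * D.ι q) = e * D.ι (p * q)) ∧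
    (∀ p q : MvPolynomial (Fin n) ℂ, (∀ w : W, D.act w p = p) →
      (∀ w : W, D.act w q = q) → e * D.ι p = e * D.ι q → p = q) := by
  intro e
  rw [show e = D.symmetrizer from rfl]
  refine ⟨D.symmetrizer_mul_self, fun x => ⟨?_, ?_⟩, fun a b => ?_,
    fun p q hp _ => D.symmetrizer_mul_ι_mul_symmetrizer_mul_ι hp q,
    fun p q hp hq => D.eq_of_symmetrizer_mul_ι_eq hp hq⟩
  · rintro ⟨h, rfl⟩
    exact D.symmetrizer_mul_mul_symmetrizer_mem h
  · rintro ⟨p, hp, rfl⟩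
    exact ⟨D.ι p, (D.symmetrizer_mul_ι_mul_symmetrizer_of_invariant hp).symm⟩
  · obtain ⟨p, hp, hpa⟩ := D.symmetrizer_mul_mul_symmetrizer_mem a
    obtain ⟨q, hq, hqb⟩ := D.symmetrizer_mul_mul_symmetrizer_mem b
    rw [hpa, hqb, D.symmetrizer_mul_ι_mul_symmetrizer_mul_ι hp,
      D.symmetrizer_mul_ι_mul_symmetrizer_mul_ι hq, mul_comm]
end

section
/- For the Weyl group W acting on the group algebra ℂ[P] of the weight lattice P, and for any W-invariant parameter k with ρ(k) strictly dominant, the joint eigenvalues μ + w^μ(ρ(k)) of the Dunkl–Cherednik operators on the nonsymmetric polynomials E(μ,k), μ ∈ P, are pairwise distinct. -/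
/-!
With `x = dp μ + ρ` and `y = dp ν + ρ`, both in the open dominant chamber, the hypothesis reads
`wf μ x = wf ν y`, so `g = (wf ν)⁻¹ * wf μ ∈ W` maps a point of the chamber into the chamber. Such a
`g` is trivial: an irredundant set `Δ` of positive roots generating the positive roots as a cone is
a simple system, `W` is generated by the reflections in `Δ`, and by the exchange property a
nonempty shortest word for `g` would send its last simple root to a negative root, which a
chamber-preserving `g` cannot do. Hence `wf μ = wf ν`, and `μ = ν`.
-/

open RealInnerProductSpace

structure PosRootSystem (V : Type*) [NormedAddCommGroup V] [InnerProductSpace ℝ V] where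
  roots : Finset V
  pos : Finset V
  reflection : V → V ≃ₗ[ℝ] V
  ρ : V
  mem_roots_iff : ∀ α, α ∈ roots ↔ α ∈ pos ∨ -α ∈ pos
  reflection_apply : ∀ α ∈ roots, ∀ v, reflection α v = v - (2 * ⟪v, α⟫ / ⟪α, α⟫) • α
  reflection_mem_roots : ∀ α ∈ roots, ∀ β ∈ roots, reflection α β ∈ roots
  inner_ρ_pos : ∀ α ∈ pos, 0 < ⟪ρ, α⟫

namespace PosRootSystem

variable {V : Type*} [NormedAddCommGroup V] [InnerProductSpace ℝ V] (S : PosRootSystem V)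

def InChamber (x : V) : Prop := ∀ α ∈ S.pos, 0 < ⟪x, α⟫

def weylGroup : Subgroup (V ≃ₗ[ℝ] V) :=
  Subgroup.closure {g | ∃ α ∈ S.roots, g = S.reflection α}

variable {S} {α β x : V}

lemma mem_roots_of_mem_pos (h : α ∈ S.pos) : α ∈ S.roots := (S.mem_roots_iff α).2 (.inl h)

lemma neg_mem_roots (h : α ∈ S.roots) : -α ∈ S.roots := by
  rw [S.mem_roots_iff, neg_neg, or_comm]
  exact (S.mem_roots_iff α).1 h

lemma InChamber.mem_pos (hx : S.InChamber x) (hα : α ∈ S.roots) (h : 0 < ⟪x, α⟫) :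
    α ∈ S.pos := by
  refine ((S.mem_roots_iff α).1 hα).resolve_right fun hneg => ?_
  have := hx _ hneg
  rw [inner_neg_right] at this
  linarith

lemma ne_zero_of_mem_roots (h : α ∈ S.roots) : α ≠ 0 := by
  rintro rfl
  rcases (S.mem_roots_iff 0).1 h with h0 | h0 <;>
    simpa using S.inner_ρ_pos _ h0

lemma neg_notMem_pos (h : α ∈ S.pos) : -α ∉ S.pos := fun hneg => by
  have := S.inner_ρ_pos _ hneg
  rw [inner_neg_right] at this
  linarith [S.inner_ρ_pos α h]

lemma inner_reflection_reflection (hα : α ∈ S.roots) (x y : V) :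
    ⟪S.reflection α x, S.reflection α y⟫ = ⟪x, y⟫ := by
  have : ⟪α, α⟫ ≠ 0 := real_inner_self_pos.2 (ne_zero_of_mem_roots hα) |>.ne'
  simp only [S.reflection_apply α hα, inner_sub_left, inner_sub_right, real_inner_smul_left,
    real_inner_smul_right, real_inner_comm α y]
  field_simp
  ring

lemma reflection_self (hα : α ∈ S.roots) : S.reflection α α = -α := by
  have : ⟪α, α⟫ ≠ 0 := real_inner_self_pos.2 (ne_zero_of_mem_roots hα) |>.ne'
  rw [S.reflection_apply α hα, mul_div_assoc, div_self this, mul_one, two_smul]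
  abel

lemma reflection_mul_self (hα : α ∈ S.roots) : S.reflection α * S.reflection α = 1 := by
  have : ⟪α, α⟫ ≠ 0 := real_inner_self_pos.2 (ne_zero_of_mem_roots hα) |>.ne'
  ext v
  simp only [LinearEquiv.mul_apply, LinearEquiv.coe_one, id, S.reflection_apply α hα,
    inner_sub_left, real_inner_smul_left]
  match_scalars <;> field_simp
  ring

lemma reflection_inv (hα : α ∈ S.roots) : (S.reflection α)⁻¹ = S.reflection α :=
  inv_eq_of_mul_eq_one_right (reflection_mul_self hα)

lemma reflection_eq_of_eq_smul (hα : α ∈ S.roots) (hβ : β ∈ S.roots) {c : ℝ}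
    (h : β = c • α) : S.reflection β = S.reflection α := by
  have hc : c ≠ 0 := by rintro rfl; exact ne_zero_of_mem_roots hβ (by simpa using h)
  have : ⟪α, α⟫ ≠ 0 := real_inner_self_pos.2 (ne_zero_of_mem_roots hα) |>.ne'
  ext v
  rw [S.reflection_apply β hβ, S.reflection_apply α hα, h]
  simp only [real_inner_smul_left, real_inner_smul_right, smul_smul]
  match_scalars <;> field_simp

lemma reflection_neg (hα : α ∈ S.roots) : S.reflection (-α) = S.reflection α :=
  reflection_eq_of_eq_smul hα (neg_mem_roots hα) (neg_one_smul ℝ α).symm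

lemma reflection_apply_eq_conj {w : V ≃ₗ[ℝ] V} (hw : ∀ x y, ⟪w x, w y⟫ = ⟪x, y⟫)
    (hβ : β ∈ S.roots) (hwβ : w β ∈ S.roots) :
    S.reflection (w β) = w * S.reflection β * w⁻¹ := by
  ext v
  have hv : v = w (w⁻¹ v) := (w.apply_symm_apply v).symm
  rw [LinearEquiv.mul_apply, LinearEquiv.mul_apply, S.reflection_apply _ hwβ,
    S.reflection_apply _ hβ, map_sub, map_smul, ← hv]
  conv_lhs => rw [hv, hw, hw, ← hv]

lemma inner_apply_apply_of_mem_weylGroup {g : V ≃ₗ[ℝ] V} (hg : g ∈ S.weylGroup) (x y : V) :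
    ⟪g x, g y⟫ = ⟪x, y⟫ := by
  induction hg using Subgroup.closure_induction'' generalizing x y with
  | mem _ h | inv_mem _ h =>
    obtain ⟨α, hα, rfl⟩ := h
    simp only [reflection_inv hα, inner_reflection_reflection hα]
  | one => rfl
  | mul g h _ _ hg hh => rw [LinearEquiv.mul_apply, LinearEquiv.mul_apply, hg, hh]

lemma apply_mem_roots_of_mem_weylGroup {g : V ≃ₗ[ℝ] V} (hg : g ∈ S.weylGroup)
    (hβ : β ∈ S.roots) : g β ∈ S.roots := by
  induction hg using Subgroup.closure_induction'' generalizing β with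
  | mem _ h | inv_mem _ h =>
    obtain ⟨α, hα, rfl⟩ := h
    simpa only [reflection_inv hα] using S.reflection_mem_roots α hα β hβ
  | one => exact hβ
  | mul g h _ _ hg hh => exact hg (hh hβ)

lemma inner_pos_or_eq_zero_of_mem_hull {u : V} {s : Set V} (hs : ∀ v ∈ s, 0 < ⟪u, v⟫)
    (hx : x ∈ PointedCone.hull ℝ s) : 0 < ⟪u, x⟫ ∨ x = 0 := by
  induction hx using Submodule.span_induction with
  | mem v hv => exact .inl (hs v hv)
  | zero => exact .inr rfl
  | add v w _ _ hv hw =>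
    rw [inner_add_right]
    rcases hv with hv | rfl <;> rcases hw with hw | rfl <;> simp_all [add_pos]
  | smul c v _ hv =>
    obtain ⟨c, hc⟩ := c
    rw [Nonneg.mk_smul, real_inner_smul_right]
    rcases hc.eq_or_lt with rfl | hc
    · simp
    · rcases hv with hv | rfl
      · exact .inl (mul_pos hc hv)
      · simp

lemma inner_nonneg_of_mem_hull {u : V} {s : Set V} (hs : ∀ v ∈ s, 0 ≤ ⟪u, v⟫)
    (hx : x ∈ PointedCone.hull ℝ s) : 0 ≤ ⟪u, x⟫ := by
  induction hx using Submodule.span_induction with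
  | mem v hv => exact hs v hv
  | zero => simp
  | add v w _ _ hv hw => rw [inner_add_right]; exact add_nonneg hv hw
  | smul c v _ hv =>
    rw [← Nonneg.coe_smul, real_inner_smul_right]
    exact mul_nonneg c.2 hv

lemma exists_inner_pos_of_mem_hull {s : Set V} (hx : x ∈ PointedCone.hull ℝ s) (hx0 : x ≠ 0) :
    ∃ v ∈ s, 0 < ⟪x, v⟫ := by
  by_contra! h
  have := inner_nonneg_of_mem_hull (u := -x) (fun v hv => by simpa using h v hv) hx
  rw [inner_neg_left, neg_nonneg] at this
  exact hx0 (real_inner_self_nonpos.1 this)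

lemma inner_ρ_reflection_lt (hα : α ∈ S.pos) (h : 0 < ⟪β, α⟫) :
    ⟪S.ρ, S.reflection α β⟫ < ⟪S.ρ, β⟫ := by
  have hαα : 0 < ⟪α, α⟫ := real_inner_self_pos.2 (ne_zero_of_mem_roots (mem_roots_of_mem_pos hα))
  rw [S.reflection_apply α (mem_roots_of_mem_pos hα), inner_sub_right, real_inner_smul_right,
    sub_lt_self_iff]
  exact mul_pos (by positivity) (S.inner_ρ_pos α hα)

variable (S) in
/-- A simple system (Humphreys, *Reflection groups and Coxeter groups*, §1.3), characterised by
irredundancy rather than by linear independence. -/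
structure IsSimpleSystem (Δ : Finset V) : Prop where
  subset_pos : Δ ⊆ S.pos
  mem_hull : ∀ β ∈ S.pos, β ∈ PointedCone.hull ℝ (Δ : Set V)
  notMem_hull_diff : ∀ α ∈ Δ, α ∉ PointedCone.hull ℝ ((Δ : Set V) \ {α})

variable (S) in
lemma exists_isSimpleSystem : ∃ Δ, S.IsSimpleSystem Δ := by
  classical
  obtain ⟨Δ, hΔ, hmin⟩ := (S.pos.powerset.filter fun Δ : Finset V =>
      ∀ β ∈ S.pos, β ∈ PointedCone.hull ℝ (Δ : Set V)).exists_min_image Finset.card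
    ⟨S.pos, Finset.mem_filter.2 ⟨Finset.mem_powerset_self _, fun β hβ =>
      PointedCone.subset_hull (Finset.mem_coe.2 hβ)⟩⟩
  rw [Finset.mem_filter, Finset.mem_powerset] at hΔ
  refine ⟨Δ, hΔ.1, hΔ.2, fun α hα hmem => ?_⟩
  have hle : PointedCone.hull ℝ (Δ : Set V) ≤ PointedCone.hull ℝ (Δ.erase α : Set V) := by
    rw [Finset.coe_erase]
    refine Submodule.span_le.2 fun γ hγ => ?_
    by_cases hγα : γ = α
    · exact hγα ▸ hmem
    · exact PointedCone.subset_hull ⟨hγ, hγα⟩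
  have := hmin (Δ.erase α) (Finset.mem_filter.2
    ⟨Finset.mem_powerset.2 ((Finset.erase_subset α Δ).trans hΔ.1), fun β hβ => hle (hΔ.2 β hβ)⟩)
  exact (Finset.card_erase_lt_of_mem hα).not_ge this

variable {Δ : Finset V}

lemma IsSimpleSystem.exists_eq_smul_of_neg_mem_pos (hΔ : S.IsSimpleSystem Δ) (hα : α ∈ Δ)
    (hβ : β ∈ S.pos) (hneg : -S.reflection α β ∈ S.pos) : ∃ c : ℝ, β = c • α := by
  -- Write `β` and `-s_α β` as multiples of `α` plus elements of the cone `C` over `Δ \ {α}`: their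
  -- sum lies in `C` and is a multiple of `α`, a positive one being excluded by irredundancy of `Δ`
  -- and a nonpositive one forcing the `C`-parts to vanish after pairing with `ρ`.
  set C := PointedCone.hull ℝ ((Δ : Set V) \ {α})
  have split : ∀ γ ∈ S.pos, ∃ a : ℝ, ∃ z ∈ C, γ = a • α + z := by
    intro γ hγ
    have := hΔ.mem_hull γ hγ
    rw [← Set.insert_sdiff_self_of_mem (Finset.mem_coe.2 hα), Submodule.mem_span_insert] at this
    obtain ⟨a, z, hz, rfl⟩ := this
    exact ⟨a, z, hz, by rw [Nonneg.coe_smul]⟩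
  obtain ⟨a, z₁, hz₁, rfl⟩ := split β hβ
  obtain ⟨b, z₂, hz₂, hb⟩ := split _ hneg
  have hαp := hΔ.subset_pos hα
  rw [S.reflection_apply α (mem_roots_of_mem_pos hαp)] at hb
  set k := 2 * ⟪a • α + z₁, α⟫ / ⟪α, α⟫
  have hsum : z₁ + z₂ = (k - a - b) • α := by linear_combination (norm := module) -hb
  rcases le_or_gt (k - a - b) 0 with he | he
  · have hρ : ∀ v ∈ (Δ : Set V) \ {α}, 0 < ⟪S.ρ, v⟫ := fun v hv =>
      S.inner_ρ_pos v (hΔ.subset_pos hv.1)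
    have hle : ⟪S.ρ, z₁⟫ + ⟪S.ρ, z₂⟫ ≤ 0 := by
      rw [← inner_add_right, hsum, real_inner_smul_right]
      exact mul_nonpos_of_nonpos_of_nonneg he (S.inner_ρ_pos α hαp).le
    have h₂ := inner_nonneg_of_mem_hull (fun v hv => (hρ v hv).le) hz₂
    rcases inner_pos_or_eq_zero_of_mem_hull hρ hz₁ with h₁ | rfl
    · linarith
    · exact ⟨a, add_zero _⟩
  · refine absurd ?_ (hΔ.notMem_hull_diff α hα)
    rw [← C.smul_mem_iff he, ← hsum]
    exact C.add_mem hz₁ hz₂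

lemma IsSimpleSystem.reflection_mem_closure (hΔ : S.IsSimpleSystem Δ) (hβ : β ∈ S.pos) :
    S.reflection β ∈ Subgroup.closure (S.reflection '' Δ) := by
  classical
  -- A counterexample minimising `⟪ρ, β⟫` is lowered by some simple reflection `s_δ`.
  by_contra hβW
  obtain ⟨β, hβ', hmin⟩ := (S.pos.filter fun γ =>
      S.reflection γ ∉ Subgroup.closure (S.reflection '' Δ)).exists_min_image (⟪S.ρ, ·⟫)
    ⟨β, Finset.mem_filter.2 ⟨hβ, hβW⟩⟩
  obtain ⟨hβ, hβW⟩ := Finset.mem_filter.1 hβ'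
  have hβr := mem_roots_of_mem_pos hβ
  obtain ⟨δ, hδ, hβδ⟩ := exists_inner_pos_of_mem_hull (hΔ.mem_hull β hβ) (ne_zero_of_mem_roots hβr)
  have hδr := mem_roots_of_mem_pos (hΔ.subset_pos hδ)
  have hsδ : S.reflection δ ∈ Subgroup.closure (S.reflection '' Δ) :=
    Subgroup.subset_closure ⟨δ, hδ, rfl⟩
  rcases (S.mem_roots_iff _).1 (S.reflection_mem_roots δ hδr β hβr) with hη | hη
  · have hlt := inner_ρ_reflection_lt (hΔ.subset_pos hδ) hβδ
    have hsη : S.reflection (S.reflection δ β) ∈ Subgroup.closure (S.reflection '' Δ) := by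
      by_contra h
      exact hlt.not_ge (hmin _ (Finset.mem_filter.2 ⟨hη, h⟩))
    have hconj := reflection_apply_eq_conj (inner_reflection_reflection hδr)
      (mem_roots_of_mem_pos hη) (by rwa [← LinearEquiv.mul_apply, reflection_mul_self hδr])
    rw [← LinearEquiv.mul_apply, reflection_mul_self hδr, LinearEquiv.coe_one, id] at hconj
    exact hβW (hconj ▸ mul_mem (mul_mem hsδ hsη) (inv_mem hsδ))
  · obtain ⟨c, hc⟩ := hΔ.exists_eq_smul_of_neg_mem_pos hδ hβ hη
    exact hβW (reflection_eq_of_eq_smul hδr hβr hc ▸ hsδ)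

lemma IsSimpleSystem.weylGroup_le (hΔ : S.IsSimpleSystem Δ) :
    S.weylGroup ≤ Subgroup.closure (S.reflection '' Δ) := by
  refine Subgroup.closure_le _ |>.2 ?_
  rintro _ ⟨α, hα, rfl⟩
  rcases (S.mem_roots_iff α).1 hα with h | h
  · exact hΔ.reflection_mem_closure h
  · exact reflection_neg hα ▸ hΔ.reflection_mem_closure h

variable (S) in
def wordProd (l : List V) : V ≃ₗ[ℝ] V := (l.map S.reflection).prod

@[simp]
lemma wordProd_nil : S.wordProd [] = 1 := rfl

@[simp]
lemma wordProd_cons (a : V) (l : List V) : S.wordProd (a :: l) = S.reflection a * S.wordProd l :=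
  List.prod_cons

@[simp]
lemma wordProd_append (l₁ l₂ : List V) : S.wordProd (l₁ ++ l₂) = S.wordProd l₁ * S.wordProd l₂ := by
  simp [wordProd]

lemma wordProd_mem_weylGroup {l : List V} (hl : ∀ a ∈ l, a ∈ S.roots) :
    S.wordProd l ∈ S.weylGroup :=
  Subgroup.list_prod_mem _ fun _ h => by
    obtain ⟨a, ha, rfl⟩ := List.mem_map.1 h
    exact Subgroup.subset_closure ⟨a, hl a ha, rfl⟩

lemma exists_wordProd_eq {T : Set V} (hT : T ⊆ S.roots) {g : V ≃ₗ[ℝ] V}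
    (hg : g ∈ Subgroup.closure (S.reflection '' T)) : ∃ l, (∀ a ∈ l, a ∈ T) ∧ S.wordProd l = g := by
  induction hg using Subgroup.closure_induction'' with
  | mem _ h | inv_mem _ h =>
    obtain ⟨α, hα, rfl⟩ := h
    exact ⟨[α], by simpa using hα, by simp [reflection_inv (hT hα)]⟩
  | one => exact ⟨[], by simp, rfl⟩
  | mul _ _ _ _ hg hh =>
    obtain ⟨l₁, hl₁, rfl⟩ := hg
    obtain ⟨l₂, hl₂, rfl⟩ := hh
    exact ⟨l₁ ++ l₂, by simpa using fun a ha => ha.elim (hl₁ a) (hl₂ a), wordProd_append l₁ l₂⟩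

lemma IsSimpleSystem.exists_wordProd_eq_mul_reflection (hΔ : S.IsSimpleSystem Δ) {l : List V}
    (hl : ∀ a ∈ l, a ∈ Δ) (hα : α ∈ Δ) (hneg : -S.wordProd l α ∈ S.pos) :
    ∃ l' : List V, (∀ a ∈ l', a ∈ Δ) ∧ l'.length < l.length ∧
      S.wordProd l' = S.wordProd l * S.reflection α := by
  have hαr := mem_roots_of_mem_pos (hΔ.subset_pos hα)
  induction l with
  | nil => exact absurd hneg (neg_notMem_pos (hΔ.subset_pos hα))
  | cons a t ih =>
    simp only [List.mem_cons, forall_eq_or_imp] at hl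
    have har := mem_roots_of_mem_pos (hΔ.subset_pos hl.1)
    have ht := wordProd_mem_weylGroup fun b hb => mem_roots_of_mem_pos (hΔ.subset_pos (hl.2 b hb))
    have hβ := apply_mem_roots_of_mem_weylGroup ht hαr
    rw [wordProd_cons, LinearEquiv.mul_apply] at hneg
    rcases (S.mem_roots_iff _).1 hβ with hpos | hneg'
    · obtain ⟨c, hc⟩ := hΔ.exists_eq_smul_of_neg_mem_pos hl.1 hpos hneg
      have hconj : S.reflection a = S.wordProd t * S.reflection α * (S.wordProd t)⁻¹ := by
        rw [← reflection_eq_of_eq_smul har hβ hc,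
          reflection_apply_eq_conj (inner_apply_apply_of_mem_weylGroup ht) hαr hβ]
      refine ⟨t, hl.2, by simp, ?_⟩
      rw [wordProd_cons, hconj, inv_mul_cancel_right, mul_assoc, reflection_mul_self hαr, mul_one]
    · obtain ⟨l', hl', hlen, heq⟩ := ih hl.2 hneg'
      refine ⟨a :: l', by simpa [hl.1] using hl', by simpa using hlen, ?_⟩
      rw [wordProd_cons, wordProd_cons, heq, mul_assoc]

lemma IsSimpleSystem.wordProd_eq_one (hΔ : S.IsSimpleSystem Δ) {l : List V}
    (hl : ∀ a ∈ l, a ∈ Δ) (hx : S.InChamber x) (hlx : S.InChamber (S.wordProd l x)) :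
    S.wordProd l = 1 := by
  induction hn : l.length using Nat.strong_induction_on generalizing l with
  | _ n ih =>
    rcases l.eq_nil_or_concat' with rfl | ⟨l₀, z, rfl⟩
    · rfl
    set g := S.wordProd (l₀ ++ [z])
    have hz : z ∈ Δ := hl z (by simp)
    have hzr := mem_roots_of_mem_pos (hΔ.subset_pos hz)
    have hg : g ∈ S.weylGroup :=
      wordProd_mem_weylGroup fun a ha => mem_roots_of_mem_pos (hΔ.subset_pos (hl a ha))
    have hgz : g z ∈ S.pos := hlx.mem_pos (apply_mem_roots_of_mem_weylGroup hg hzr) <| by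
      rw [inner_apply_apply_of_mem_weylGroup hg]
      exact hx z (hΔ.subset_pos hz)
    have hg₀ : S.wordProd l₀ = g * S.reflection z := by
      simp [g, mul_assoc, reflection_mul_self hzr]
    obtain ⟨l', hl', hlen, heq⟩ := hΔ.exists_wordProd_eq_mul_reflection (l := l₀)
      (fun a ha => hl a (by simp [ha])) hz
      (by rwa [hg₀, LinearEquiv.mul_apply, reflection_self hzr, map_neg, neg_neg])
    rw [hg₀, mul_assoc, reflection_mul_self hzr, mul_one] at heq
    rw [← heq] at hlx ⊢
    exact ih l'.length (by simp at hn; omega) hl' hlx rfl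

lemma eq_one_of_mem_weylGroup {g : V ≃ₗ[ℝ] V} (hg : g ∈ S.weylGroup) (hx : S.InChamber x)
    (hgx : S.InChamber (g x)) : g = 1 := by
  obtain ⟨Δ, hΔ⟩ := S.exists_isSimpleSystem
  obtain ⟨l, hl, rfl⟩ :=
    exists_wordProd_eq (fun a ha => mem_roots_of_mem_pos (hΔ.subset_pos ha)) (hΔ.weylGroup_le hg)
  exact hΔ.wordProd_eq_one hl hx hgx

lemma eq_of_mem_weylGroup_of_apply_eq {g h : V ≃ₗ[ℝ] V} (hg : g ∈ S.weylGroup)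
    (hh : h ∈ S.weylGroup) {y : V} (hx : S.InChamber x) (hy : S.InChamber y) (hxy : g x = h y) :
    g = h := by
  refine (inv_mul_eq_one.1 (eq_one_of_mem_weylGroup (mul_mem (inv_mem hh) hg) hx ?_)).symm
  rwa [LinearEquiv.mul_apply, hxy, LinearEquiv.coe_inv, LinearEquiv.symm_apply_apply]

end PosRootSystem

theorem stmt10_general {V : Type*} [NormedAddCommGroup V] [InnerProductSpace ℝ V]
    (Φ Φp : Finset V)
    (hdecomp : ∀ α : V, α ∈ Φ ↔ (α ∈ Φp ∨ -α ∈ Φp))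
    (refl : V → (V ≃ₗ[ℝ] V))
    (hrefl : ∀ α ∈ Φ, ∀ v : V, refl α v = v - (2 * ⟪v, α⟫ / ⟪α, α⟫) • α)
    (hclosed : ∀ α ∈ Φ, ∀ β ∈ Φ, refl α β ∈ Φ)
    (W : Subgroup (V ≃ₗ[ℝ] V))
    (hW : W = Subgroup.closure {g : V ≃ₗ[ℝ] V | ∃ α ∈ Φ, g = refl α})
    (P : Set V) (ρ : V) (hρ : ∀ α ∈ Φp, 0 < ⟪ρ, α⟫)
    (dp : V → V) (wf : V → W)
    (hdp : ∀ μ ∈ P, ∀ α ∈ Φp, 0 ≤ ⟪dp μ, α⟫)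
    (hwf : ∀ μ ∈ P, (wf μ : V ≃ₗ[ℝ] V) (dp μ) = μ) :
    ∀ μ ∈ P, ∀ ν ∈ P,
      μ + (wf μ : V ≃ₗ[ℝ] V) ρ = ν + (wf ν : V ≃ₗ[ℝ] V) ρ → μ = ν := by
  intro μ hμ ν hν h
  let S : PosRootSystem V := ⟨Φ, Φp, refl, ρ, hdecomp, hrefl, hclosed, hρ⟩
  have hmem : ∀ μ, (wf μ : V ≃ₗ[ℝ] V) ∈ S.weylGroup := fun μ => hW ▸ (wf μ).2
  have hchamber : ∀ μ ∈ P, S.InChamber (dp μ + ρ) := fun μ hμ α hα => by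
    rw [inner_add_left]
    linarith [hdp μ hμ α hα, hρ α hα]
  have hwf_eq : (wf μ : V ≃ₗ[ℝ] V) = wf ν :=
    PosRootSystem.eq_of_mem_weylGroup_of_apply_eq (hmem μ) (hmem ν) (hchamber μ hμ)
      (hchamber ν hν) (by rw [map_add, map_add, hwf μ hμ, hwf ν hν, h])
  rw [hwf_eq] at h
  exact add_right_cancel h

/-- For a finite root system `Φ = Φ₊ ∪ (−Φ₊)` in a Euclidean space `V` with
Weyl group `W` (generated by the root reflections), a strictly dominant
`ρ` (·i.e. `⟪ρ,α⟫ > 0` for all `α ∈ Φ₊`), a `W`-stable set `P` (the weight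
lattice), and for each `μ ∈ P` a dominant representative `dp μ` of `Wμ` with
`(wf μ)(dp μ) = μ`, the map `μ ↦ μ + (wf μ)(ρ)` is injective on `P`. -/
theorem stmt10 {V : Type*} [NormedAddCommGroup V] [InnerProductSpace ℝ V]
    [FiniteDimensional ℝ V]
    (Φ Φp : Finset V) (hΦ0 : (0 : V) ∉ Φ)
    (hdecomp : ∀ α : V, α ∈ Φ ↔ (α ∈ Φp ∨ -α ∈ Φp))
    (hpos : ∀ α ∈ Φp, -α ∉ Φp)
    (refl : V → (V ≃ₗ[ℝ] V))
    (hrefl : ∀ α ∈ Φ, ∀ v : V, refl α v = v - (2 * ⟪v, α⟫ / ⟪α, α⟫) • α)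
    (hclosed : ∀ α ∈ Φ, ∀ β ∈ Φ, refl α β ∈ Φ)
    (W : Subgroup (V ≃ₗ[ℝ] V))
    (hW : W = Subgroup.closure {g : V ≃ₗ[ℝ] V | ∃ α ∈ Φ, g = refl α})
    (P : Set V) (ρ : V) (hρ : ∀ α ∈ Φp, 0 < ⟪ρ, α⟫)
    (dp : V → V) (wf : V → W)
    (hdp : ∀ μ ∈ P, ∀ α ∈ Φp, 0 ≤ ⟪dp μ, α⟫)
    (hwf : ∀ μ ∈ P, (wf μ : V ≃ₗ[ℝ] V) (dp μ) = μ) :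
    ∀ μ ∈ P, ∀ ν ∈ P,
      μ + (wf μ : V ≃ₗ[ℝ] V) ρ = ν + (wf ν : V ≃ₗ[ℝ] V) ρ → μ = ν :=
  stmt10_general Φ Φp hdecomp refl hrefl hclosed W hW P ρ hρ dp wf hdp hwf
end

section
/- The rank-one (BC₁) nonsymmetric shift operator S = Δ⁻¹(X∂_X − (1−s)/(1−X⁻²)), with Δ = X − X⁻¹, preserves the space of Laurent polynomials ℂ[X,X⁻¹]. -/
/-!
`S` is linear, so it suffices to treat monomials. For `Xⁿ` the antisymmetrisation
`(1 - s) Xⁿ = Xⁿ - X⁻ⁿ` is divisible by `Δ`, with Laurent quotient `hₙ`, and the values of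
`S Xⁿ` satisfy `S Xⁿ⁺¹ = X (S Xⁿ + hₙ)`; induction on `n ∈ ℤ` in both directions, starting
from `S 1 = 0`, produces Laurent polynomials for all of them.
-/

noncomputable def ev (f : ℤ →₀ ℂ) (x : ℂ) : ℂ := f.sum fun n a => a * x ^ n

lemma ev_add (f g : ℤ →₀ ℂ) (x : ℂ) : ev (f + g) x = ev f x + ev g x :=
  Finsupp.sum_add_index' (fun _ => zero_mul _) fun _ _ _ => add_mul _ _ _

lemma ev_sub (f g : ℤ →₀ ℂ) (x : ℂ) : ev (f - g) x = ev f x - ev g x :=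
  Finsupp.sum_sub_index fun _ _ _ => sub_mul _ _ _

lemma ev_smul (a : ℂ) (f : ℤ →₀ ℂ) (x : ℂ) : ev (a • f) x = a * ev f x := by
  rw [ev, Finsupp.sum_smul_index fun _ => zero_mul _, ev, Finsupp.sum, Finsupp.sum,
    Finset.mul_sum]
  exact Finset.sum_congr rfl fun _ _ => mul_assoc _ _ _

lemma ev_single (n : ℤ) (a x : ℂ) : ev (Finsupp.single n a) x = a * x ^ n :=
  Finsupp.sum_single_index (zero_mul _)

lemma ev_mapDomain_add_right (k : ℤ) (f : ℤ →₀ ℂ) {x : ℂ} (hx : x ≠ 0) :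
    ev (f.mapDomain (· + k)) x = x ^ k * ev f x := by
  rw [ev, Finsupp.sum_mapDomain_index_inj (add_left_injective k), ev, Finsupp.sum,
    Finsupp.sum, Finset.mul_sum]
  refine Finset.sum_congr rfl fun n _ => ?_
  rw [zpow_add₀ hx]
  ring

lemma sub_inv_ne_zero {K : Type*} [Field K] {x : K} (hx₀ : x ≠ 0) (hx₁ : x ≠ 1)
    (hxn₁ : x ≠ -1) : x - x⁻¹ ≠ 0 := by
  have hfactor : x - x⁻¹ = x⁻¹ * ((x - 1) * (x + 1)) := by field_simp; ring
  rw [hfactor]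
  exact mul_ne_zero (inv_ne_zero hx₀)
    (mul_ne_zero (sub_ne_zero.mpr hx₁) fun h => hxn₁ (eq_neg_of_add_eq_zero_left h))

lemma exists_ev_mul_sub_inv_eq_zpow_sub_zpow_neg (n : ℤ) :
    ∃ h : ℤ →₀ ℂ, ∀ x : ℂ, x ≠ 0 → ev h x * (x - x⁻¹) = x ^ n - x ^ (-n) := by
  induction n using Int.induction_on with
  | zero => exact ⟨0, fun x _ => by simp [ev]⟩
  | succ n ih =>
    obtain ⟨h, hh⟩ := ih
    refine ⟨h.mapDomain (· + 1) + Finsupp.single (-(n : ℤ)) 1, fun x hx => ?_⟩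
    rw [ev_add, ev_mapDomain_add_right _ _ hx, ev_single, zpow_one, zpow_add_one₀ hx,
      neg_add', zpow_sub_one₀ hx]
    linear_combination x * hh x hx
  | pred n ih =>
    obtain ⟨h, hh⟩ := ih
    refine ⟨h.mapDomain (· + (-1)) - Finsupp.single (n : ℤ) 1, fun x hx => ?_⟩
    rw [ev_sub, ev_mapDomain_add_right _ _ hx, ev_single, zpow_neg_one, zpow_sub_one₀ hx,
      neg_sub', sub_neg_eq_add, zpow_add_one₀ hx]
    simp only [neg_neg] at hh ⊢
    linear_combination x⁻¹ * hh x hx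

lemma exists_ev_mul_eq_shift_numerator (n : ℤ) :
    ∃ g : ℤ →₀ ℂ, ∀ x : ℂ, x ≠ 0 →
      ev g x * ((x - x⁻¹) * (1 - x⁻¹ ^ 2)) = n * x ^ n * (1 - x⁻¹ ^ 2) - (x ^ n - x ^ (-n)) := by
  induction n using Int.induction_on with
  | zero => exact ⟨0, fun x _ => by simp [ev]⟩
  | succ n ih =>
    obtain ⟨g, hg⟩ := ih
    obtain ⟨h, hh⟩ := exists_ev_mul_sub_inv_eq_zpow_sub_zpow_neg n
    refine ⟨(g + h).mapDomain (· + 1), fun x hx => ?_⟩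
    rw [ev_mapDomain_add_right _ _ hx, ev_add, zpow_one, zpow_add_one₀ hx, neg_add',
      zpow_sub_one₀ hx]
    push_cast
    linear_combination x * hg x hx + x * (1 - x⁻¹ ^ 2) * hh x hx
      + x ^ (-(n : ℤ)) * x⁻¹ * mul_inv_cancel₀ hx
  | pred n ih =>
    obtain ⟨g, hg⟩ := ih
    obtain ⟨h, hh⟩ := exists_ev_mul_sub_inv_eq_zpow_sub_zpow_neg (-n - 1)
    refine ⟨g.mapDomain (· + (-1)) - h, fun x hx => ?_⟩
    rw [ev_sub, ev_mapDomain_add_right _ _ hx, zpow_neg_one, zpow_sub_one₀ hx, neg_sub',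
      sub_neg_eq_add, zpow_add_one₀ hx]
    have hgx := hg x hx
    have hhx := hh x hx
    rw [zpow_sub_one₀ hx, neg_sub', sub_neg_eq_add, zpow_add_one₀ hx] at hhx
    push_cast at hgx ⊢
    simp only [neg_neg] at hgx hhx ⊢
    linear_combination x⁻¹ * hgx - (1 - x⁻¹ ^ 2) * hhx
      - x ^ (n : ℤ) * x⁻¹ * mul_inv_cancel₀ hx

/-- The value at `x` of `S f`; the reflection enters as `(s·f)(x) = ev f x⁻¹`. -/
noncomputable def shiftOp (f : ℤ →₀ ℂ) (x : ℂ) : ℂ :=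
  (x - x⁻¹)⁻¹ * ((f.sum fun n a => a * (n : ℂ) * x ^ n) - (ev f x - ev f x⁻¹) / (1 - x⁻¹ ^ 2))

lemma shiftOp_zero (x : ℂ) : shiftOp 0 x = 0 := by
  simp [shiftOp, ev]

lemma shiftOp_add (f g : ℤ →₀ ℂ) (x : ℂ) : shiftOp (f + g) x = shiftOp f x + shiftOp g x := by
  rw [shiftOp, shiftOp, shiftOp, ev_add, ev_add,
    Finsupp.sum_add_index' (fun _ => by simp) fun _ _ _ => by ring]
  ring

lemma shiftOp_smul (a : ℂ) (f : ℤ →₀ ℂ) (x : ℂ) : shiftOp (a • f) x = a * shiftOp f x := by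
  rw [shiftOp, shiftOp, ev_smul, ev_smul, Finsupp.sum_smul_index fun _ => by simp,
    Finsupp.sum, Finsupp.sum]
  simp only [mul_assoc, ← Finset.mul_sum]
  ring

lemma exists_ev_eq_shiftOp_single (n : ℤ) :
    ∃ g : ℤ →₀ ℂ, ∀ x : ℂ, x ≠ 0 → x ≠ 1 → x ≠ -1 → ev g x = shiftOp (Finsupp.single n 1) x := by
  obtain ⟨g, hg⟩ := exists_ev_mul_eq_shift_numerator n
  refine ⟨g, fun x hx₀ hx₁ hxn₁ => ?_⟩
  have hΔ := sub_inv_ne_zero hx₀ hx₁ hxn₁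
  have hE : 1 - x⁻¹ ^ 2 ≠ 0 := by
    rw [show 1 - x⁻¹ ^ 2 = x⁻¹ * (x - x⁻¹) by field_simp]
    exact mul_ne_zero (inv_ne_zero hx₀) hΔ
  rw [shiftOp, ev_single, ev_single, Finsupp.sum_single_index (by simp), inv_zpow',
    eq_inv_mul_iff_mul_eq₀ hΔ, eq_sub_iff_add_eq, ← eq_sub_iff_add_eq', div_eq_iff hE]
  linear_combination hg x hx₀

/-- The rank-one (BC₁) nonsymmetric shift operator
`S = Δ⁻¹ (X∂_X − (1−s)/(1−X⁻²))`, with `Δ = X − X⁻¹`, preserves the space of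
Laurent polynomials: for every Laurent polynomial `f` there is a Laurent
polynomial `g` whose values agree with `S f` away from `x = 0, ±1`. -/
theorem stmt14 (f : ℤ →₀ ℂ) :
    ∃ g : ℤ →₀ ℂ, ∀ x : ℂ, x ≠ 0 → x ≠ 1 → x ≠ -1 →
      ev g x = (x - x⁻¹)⁻¹ *
        ((f.sum fun n a => a * (n : ℂ) * x ^ n)
          - (ev f x - ev f x⁻¹) / (1 - x⁻¹ ^ 2)) := by
  change ∃ g : ℤ →₀ ℂ, ∀ x : ℂ, x ≠ 0 → x ≠ 1 → x ≠ -1 → ev g x = shiftOp f x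
  induction f using Finsupp.induction_linear with
  | zero => exact ⟨0, fun x _ _ _ => by rw [shiftOp_zero, ev, Finsupp.sum_zero_index]⟩
  | add f₁ f₂ ih₁ ih₂ =>
    obtain ⟨g₁, hg₁⟩ := ih₁
    obtain ⟨g₂, hg₂⟩ := ih₂
    exact ⟨g₁ + g₂, fun x h₀ h₁ h₂ => by rw [ev_add, shiftOp_add, hg₁ x h₀ h₁ h₂, hg₂ x h₀ h₁ h₂]⟩
  | single n a =>
    obtain ⟨g, hg⟩ := exists_ev_eq_shiftOp_single n
    refine ⟨a • g, fun x h₀ h₁ h₂ => ?_⟩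
    rw [ev_smul, hg x h₀ h₁ h₂, ← shiftOp_smul, Finsupp.smul_single_one]
end
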